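/- Let r ≥ 1 and let m_1, …, m_r and n_1, …, n_{r-1} be positive integers with gcd(m_i, n_j) = 1 for all 1 ≤ i ≤ j ≤ r−1, and let n_r be any positive integer. Then the group G_{m_1,n_1,…,m_r,n_r} presented by ⟨x_1, …, x_r : x_1^{m_1} = 1, x_i^{n_i} = x_{i+1}^{m_{i+1}} for i = 1, …, r−1, x_r^{n_r} = 1⟩ is isomorphic to the cyclic group ℤ/dℤ, where d = gcd(m_1 m_2 ⋯ m_r, n_r). -/

import Mathlib

/-!
Write `M_i = m_1 ⋯ m_i`. The relations force `x_i ^ M_i = 1`, and since `n_i` is prime to `M_i`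
it has an inverse `b_i` modulo `M_i`, so `x_i = x_i ^ (b_i n_i) = x_{i+1} ^ (b_i m_{i+1})`.
Hence `x_i = x_r ^ E_i` with `E_r = 1`, `E_i = b_i m_{i+1} E_{i+1}`, and `x_r ^ d = 1` because
`x_r ^ M_r = x_r ^ n_r = 1`. Conversely `M_r ∣ M_i E_i`, so `x_i ↦ E_i` respects the relations
modulo `M_r`, hence modulo `d`, and defines a homomorphism onto `ℤ/dℤ` sending `x_r` to `1`.
-/

/-- The relators of the group `G_{m_1,n_1,…,m_r,n_r} = ⟨x_1, …, x_r :
x_1^{m_1} = 1, x_i^{n_i} = x_{i+1}^{m_{i+1}} (i = 1, …, r−1), x_r^{n_r} = 1⟩`,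
as elements of the free group on `r = r' + 1` generators. -/
def fullRels (r' : ℕ) (m n : Fin (r' + 1) → ℕ) :
    Set (FreeGroup (Fin (r' + 1))) :=
  {FreeGroup.of (0 : Fin (r' + 1)) ^ m 0} ∪
    Set.range (fun i : Fin r' =>
      FreeGroup.of i.castSucc ^ n i.castSucc * (FreeGroup.of i.succ ^ m i.succ)⁻¹) ∪
    {FreeGroup.of (Fin.last r') ^ n (Fin.last r')}

lemma Fin.prod_Iic_zero {M : Type*} [CommMonoid M] {n : ℕ} (f : Fin (n + 1) → M) :
    ∏ j ≤ 0, f j = f 0 := by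
  rw [← bot_eq_zero, Finset.Iic_bot, Finset.prod_singleton]

lemma Fin.prod_Iic_succ {M : Type*} [CommMonoid M] {n : ℕ} (f : Fin (n + 1) → M) (i : Fin n) :
    ∏ j ≤ i.succ, f j = (∏ j ≤ i.castSucc, f j) * f i.succ := by
  rw [Finset.Iic_eq_cons_Iio, Finset.prod_cons, mul_comm, ← Fin.orderSucc_castSucc,
    Finset.Iio_succ_eq_Iic_of_not_isMax (Fin.castSucc_lt_last i).not_isMax]

lemma Fin.prod_Iic_last {M : Type*} [CommMonoid M] {n : ℕ} (f : Fin (n + 1) → M) :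
    ∏ j ≤ Fin.last n, f j = ∏ j, f j := by
  rw [← Fin.top_eq_last, Finset.Iic_top]

lemma Nat.gcdA_mul_modEq_one {a b : ℕ} (h : a.Coprime b) : Nat.gcdA a b * a ≡ 1 [ZMOD b] := by
  have hbez := Nat.gcd_eq_gcd_ab a b
  rw [h, Nat.cast_one] at hbez
  exact Int.modEq_iff_dvd.2 ⟨Nat.gcdB a b, by linarith⟩

section Chain

variable {r : ℕ} (m n : Fin (r + 1) → ℕ)

lemma coprime_prod_Iic_of_gcd_eq_one
    (hgcd : ∀ i j : Fin r, i ≤ j → Nat.gcd (m i.castSucc) (n j.castSucc) = 1) (j : Fin r) :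
    (n j.castSucc).Coprime (∏ i ≤ j.castSucc, m i) := by
  rw [Fin.prod_Iic_castSucc]
  exact Nat.Coprime.prod_right fun i hi => Nat.Coprime.symm (hgcd i j (Finset.mem_Iic.1 hi))

def chainExponent : Fin (r + 1) → ℤ :=
  Fin.reverseInduction 1 fun i e => Nat.gcdA (n i.castSucc) (∏ j ≤ i.castSucc, m j) * m i.succ * e

@[simp] lemma chainExponent_last : chainExponent m n (Fin.last r) = 1 :=
  Fin.reverseInduction_last ..

lemma chainExponent_castSucc (i : Fin r) :
    chainExponent m n i.castSucc =
      Nat.gcdA (n i.castSucc) (∏ j ≤ i.castSucc, m j) * m i.succ * chainExponent m n i.succ :=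
  Fin.reverseInduction_castSucc ..

lemma prod_dvd_prod_Iic_mul_chainExponent (i : Fin (r + 1)) :
    ((∏ j, m j : ℕ) : ℤ) ∣ (∏ j ≤ i, m j : ℕ) * chainExponent m n i := by
  induction i using Fin.reverseInduction with
  | last => simp [Fin.prod_Iic_last]
  | cast i ih =>
    rw [Fin.prod_Iic_succ, Nat.cast_mul] at ih
    rw [chainExponent_castSucc]
    exact (ih.mul_left (Nat.gcdA _ _)).trans (dvd_of_eq (by ring))

lemma chainExponent_modEq
    (hcop : ∀ i : Fin r, (n i.castSucc).Coprime (∏ j ≤ i.castSucc, m j)) (i : Fin r) :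
    n i.castSucc * chainExponent m n i.castSucc ≡ m i.succ * chainExponent m n i.succ
      [ZMOD (∏ j, m j : ℕ)] := by
  set b := Nat.gcdA (n i.castSucc) (∏ j ≤ i.castSucc, m j)
  have hinv : ((∏ j ≤ i.castSucc, m j : ℕ) : ℤ) ∣ b * n i.castSucc - 1 :=
    (Nat.gcdA_mul_modEq_one (hcop i)).symm.dvd
  have hprod := prod_dvd_prod_Iic_mul_chainExponent m n i.succ
  rw [Fin.prod_Iic_succ, Nat.cast_mul, mul_assoc] at hprod
  have hdiff : n i.castSucc * chainExponent m n i.castSucc - m i.succ * chainExponent m n i.succ =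
      (b * n i.castSucc - 1) * (m i.succ * chainExponent m n i.succ) := by
    rw [chainExponent_castSucc]; ring
  refine (Int.modEq_iff_dvd.2 ?_).symm
  rw [hdiff]
  exact hprod.trans (mul_dvd_mul_right hinv _)

variable {m n} {G : Type*} [Group G]

lemma lift_mem_fullRels_eq_one_iff (y : Fin (r + 1) → G) :
    (∀ w ∈ fullRels r m n, FreeGroup.lift y w = 1) ↔
      y 0 ^ m 0 = 1 ∧ (∀ i : Fin r, y i.castSucc ^ n i.castSucc = y i.succ ^ m i.succ) ∧
        y (Fin.last r) ^ n (Fin.last r) = 1 := by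
  simp only [fullRels, Set.mem_union, Set.mem_singleton_iff, Set.mem_range, or_imp, forall_eq,
    forall_and, forall_exists_index, forall_apply_eq_imp_iff, map_mul, map_inv, map_pow,
    FreeGroup.lift_apply_of, mul_inv_eq_one, and_assoc]

variable {y : Fin (r + 1) → G}

lemma pow_prod_Iic_eq_one (h0 : y 0 ^ m 0 = 1)
    (hstep : ∀ i : Fin r, y i.castSucc ^ n i.castSucc = y i.succ ^ m i.succ) (i : Fin (r + 1)) :
    y i ^ ∏ j ≤ i, m j = 1 := by
  induction i using Fin.induction with
  | zero => rwa [Fin.prod_Iic_zero]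
  | succ i ih =>
    rw [Fin.prod_Iic_succ, mul_comm, pow_mul, ← hstep, ← pow_mul, mul_comm, pow_mul, ih, one_pow]

lemma eq_zpow_chainExponent
    (hcop : ∀ i : Fin r, (n i.castSucc).Coprime (∏ j ≤ i.castSucc, m j))
    (h0 : y 0 ^ m 0 = 1)
    (hstep : ∀ i : Fin r, y i.castSucc ^ n i.castSucc = y i.succ ^ m i.succ) (i : Fin (r + 1)) :
    y i = y (Fin.last r) ^ chainExponent m n i := by
  induction i using Fin.reverseInduction with
  | last => simp
  | cast i ih =>
    set b := Nat.gcdA (n i.castSucc) (∏ j ≤ i.castSucc, m j) with hb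
    have hord : ((orderOf (y i.castSucc) : ℕ) : ℤ) ∣ (∏ j ≤ i.castSucc, m j : ℕ) :=
      Int.natCast_dvd_natCast.2 (orderOf_dvd_of_pow_eq_one (pow_prod_Iic_eq_one h0 hstep _))
    calc y i.castSucc = y i.castSucc ^ (b * n i.castSucc) := by
          rw [zpow_eq_zpow_iff_modEq.2 ((Nat.gcdA_mul_modEq_one (hcop i)).of_dvd hord), zpow_one]
      _ = (y i.succ ^ m i.succ) ^ b := by
          rw [mul_comm, zpow_mul, zpow_natCast, hstep]
      _ = y (Fin.last r) ^ chainExponent m n i.castSucc := by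
          rw [ih, chainExponent_castSucc, ← hb, ← zpow_natCast, ← zpow_mul, ← zpow_mul]
          congr 1
          ring

lemma lift_chainExponent_mem_fullRels_eq_one
    (hcop : ∀ i : Fin r, (n i.castSucc).Coprime (∏ j ≤ i.castSucc, m j))
    {d : ℕ} (hd : d ∣ ∏ i, m i) (hdn : d ∣ n (Fin.last r)) :
    ∀ w ∈ fullRels r m n,
      FreeGroup.lift (fun i => Multiplicative.ofAdd (chainExponent m n i : ZMod d)) w = 1 := by
  have hd' : (d : ℤ) ∣ (∏ i, m i : ℕ) := Int.natCast_dvd_natCast.2 hd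
  rw [lift_mem_fullRels_eq_one_iff]
  simp only [← ofAdd_nsmul, nsmul_eq_mul, ← ofAdd_zero, EmbeddingLike.apply_eq_iff_eq]
  refine ⟨?_, fun i => ?_, ?_⟩
  · have h0 := prod_dvd_prod_Iic_mul_chainExponent m n 0
    rw [Fin.prod_Iic_zero] at h0
    exact_mod_cast (ZMod.intCast_zmod_eq_zero_iff_dvd _ _).2 (hd'.trans h0)
  · exact_mod_cast (ZMod.intCast_eq_intCast_iff _ _ _).2
      ((chainExponent_modEq m n hcop i).of_dvd hd')
  · rw [chainExponent_last, Int.cast_one, mul_one, ZMod.natCast_eq_zero_iff]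
    exact hdn

end Chain

theorem nonempty_mulEquiv_zmod_of_zpowers_eq_top {G : Type*} [Group G] {d : ℕ} {g : G}
    (hg : Subgroup.zpowers g = ⊤) (hgd : g ^ d = 1) (φ : G →* Multiplicative (ZMod d))
    (hφ : φ g = Multiplicative.ofAdd 1) : Nonempty (G ≃* Multiplicative (ZMod d)) := by
  have hpow (k : ℤ) : φ (g ^ k) = Multiplicative.ofAdd (k : ZMod d) := by
    rw [map_zpow, hφ, ← ofAdd_zsmul, zsmul_one]
  have hmem (x : G) : ∃ k : ℤ, g ^ k = x := Subgroup.mem_zpowers_iff.1 (hg ▸ Subgroup.mem_top x)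
  refine ⟨MulEquiv.ofBijective φ ⟨(injective_iff_map_eq_one φ).2 fun x hx => ?_, fun c => ?_⟩⟩
  · obtain ⟨k, rfl⟩ := hmem x
    rw [hpow, ← ofAdd_zero, EmbeddingLike.apply_eq_iff_eq, ZMod.intCast_zmod_eq_zero_iff_dvd] at hx
    obtain ⟨c, rfl⟩ := hx
    rw [zpow_mul, zpow_natCast, hgd, one_zpow]
  · obtain ⟨k, hk⟩ := ZMod.intCast_surjective (Multiplicative.toAdd c)
    exact ⟨g ^ k, by rw [hpow, hk, ofAdd_toAdd]⟩

theorem full_presented_group_iso_zmod_gcd_general (r' : ℕ)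
    (m n : Fin (r' + 1) → ℕ)
    (hgcd : ∀ i j : Fin r', i ≤ j → Nat.gcd (m i.castSucc) (n j.castSucc) = 1) :
    Nonempty (PresentedGroup (fullRels r' m n) ≃*
      Multiplicative (ZMod (Nat.gcd (∏ i, m i) (n (Fin.last r'))))) := by
  have hcop := coprime_prod_Iic_of_gcd_eq_one m n hgcd
  set x : Fin (r' + 1) → PresentedGroup (fullRels r' m n) := PresentedGroup.of
  have hx : FreeGroup.lift x = PresentedGroup.mk _ := by ext; rfl
  obtain ⟨h0, hstep, hlast⟩ := (lift_mem_fullRels_eq_one_iff x).1 fun w hw => by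
    rw [hx]; exact PresentedGroup.one_of_mem hw
  have hgen : Subgroup.zpowers (x (Fin.last r')) = ⊤ := by
    rw [eq_top_iff, ← PresentedGroup.closure_range_of, Subgroup.closure_le]
    rintro _ ⟨i, rfl⟩
    exact Subgroup.mem_zpowers_iff.2 ⟨_, (eq_zpow_chainExponent hcop h0 hstep i).symm⟩
  have hgd : x (Fin.last r') ^ Nat.gcd (∏ i, m i) (n (Fin.last r')) = 1 :=
    pow_gcd_eq_one.2 ⟨Fin.prod_Iic_last m ▸ pow_prod_Iic_eq_one h0 hstep _, hlast⟩
  exact nonempty_mulEquiv_zmod_of_zpowers_eq_top hgen hgd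
    (PresentedGroup.toGroup (lift_chainExponent_mem_fullRels_eq_one hcop
      (Nat.gcd_dvd_left _ _) (Nat.gcd_dvd_right _ _)))
    (by rw [PresentedGroup.toGroup.of, chainExponent_last, Int.cast_one])

/-- If `gcd(m_i, n_j) = 1` for all `1 ≤ i ≤ j ≤ r − 1` (and `n_r` is an
arbitrary positive integer), then `G_{m_1,n_1,…,m_r,n_r} ≅ ℤ/dℤ` where
`d = gcd(m_1 m_2 ⋯ m_r, n_r)`. -/
theorem full_presented_group_iso_zmod_gcd (r' : ℕ)
    (m n : Fin (r' + 1) → ℕ)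
    (hm : ∀ i, 0 < m i) (hn : ∀ j, 0 < n j)
    (hgcd : ∀ i j : Fin r', i ≤ j → Nat.gcd (m i.castSucc) (n j.castSucc) = 1) :
    Nonempty (PresentedGroup (fullRels r' m n) ≃*
      Multiplicative (ZMod (Nat.gcd (∏ i, m i) (n (Fin.last r'))))) :=
  full_presented_group_iso_zmod_gcd_general r' m n hgcd
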